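/- arXiv:2310.08987 — 2 statements merged into one kernel-verified Lean document; each statement's English description precedes it below -/
import Mathlib

section
/- Let $k$ be an algebraically closed field of characteristic zero and let $n \geq 0$. A polynomial $f \in k[t_1,\dots,t_{n+1}]$ satisfies $f(c_1 t_1,\dots,c_{n+1} t_{n+1}) = f(t_1,\dots,t_{n+1})$ for every tuple $(c_1,\dots,c_{n+1})$ of units of $k$ with $c_1 \cdots c_{n+1} = 1$ if and only if $f$ lies in the $k$-subalgebra of $k[t_1,\dots,t_{n+1}]$ generated by the single element $t_1 \cdots t_{n+1}$. -/
open MvPolynomial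

private lemma scale_monomial {k : Type*} [CommSemiring k] {N : ℕ} (c : Fin N → k)
    (m : Fin N →₀ ℕ) (r : k) :
    aeval (fun i => C (c i) * X i) (monomial m r) =
      C (∏ i, c i ^ m i) * monomial m r := by
  rw [aeval_monomial, monomial_eq]
  simp only [mul_pow]
  rw [Finsupp.prod_mul]
  have h1 : (m.prod fun i e => (C (c i) : MvPolynomial (Fin N) k) ^ e)
      = C (∏ i, c i ^ m i) := by
    rw [← Finsupp.prod_pow m c, Finsupp.prod, Finsupp.prod, map_prod]
    simp [map_pow]
  rw [h1, algebraMap_eq]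
  ring

lemma coeff_scale {k : Type*} [CommSemiring k] {N : ℕ} (c : Fin N → k)
    (f : MvPolynomial (Fin N) k) (m : Fin N →₀ ℕ) :
    coeff m (aeval (fun i => C (c i) * X i) f) = (∏ i, c i ^ m i) * coeff m f := by
  induction f using MvPolynomial.induction_on' with
  | monomial m' r =>
    rw [scale_monomial, coeff_C_mul, coeff_monomial]
    split_ifs with h
    · subst h; rfl
    · simp
  | add p q hp hq =>
    rw [map_add, coeff_add, coeff_add, hp, hq, mul_add]

set_option maxHeartbeats 1000000 in
/-- A polynomial in `k[t₁,…,t_{n+1}]` (here `k` algebraically closed of characteristic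
zero) is invariant under rescaling the variables by every tuple of units with product `1`
if and only if it lies in the `k`-subalgebra generated by the product `t₁ ⋯ t_{n+1}`. -/
theorem invariant_iff_mem_adjoin_prod {k : Type*} [Field k] [IsAlgClosed k] [CharZero k]
    (n : ℕ) (f : MvPolynomial (Fin (n + 1)) k) :
    (∀ c : Fin (n + 1) → kˣ, (∏ i, c i) = 1 →
        aeval (fun i => C ((c i : k)) * X i) f = f) ↔
      f ∈ Algebra.adjoin k ({∏ i, X i} : Set (MvPolynomial (Fin (n + 1)) k)) := by
  classical
  constructor
  · intro h
    -- every exponent vector in the support is constant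
    have key : ∀ m ∈ f.support, ∀ i j : Fin (n + 1), m i = m j := by
      intro m hm i j
      by_cases hij : i = j
      · rw [hij]
      set a : kˣ := Units.mk0 (2 : k) two_ne_zero with ha
      set c : Fin (n + 1) → kˣ := fun l => if l = i then a else if l = j then a⁻¹ else 1
        with hc
      have hci : c i = a := by simp [hc]
      have hcj : c j = a⁻¹ := by simp [hc, Ne.symm hij]
      have hprod : (∏ l, c l) = 1 := by
        rw [← Finset.mul_prod_erase _ _ (Finset.mem_univ i),
          ← Finset.mul_prod_erase _ _ (Finset.mem_erase.mpr ⟨Ne.symm hij, Finset.mem_univ j⟩),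
          hci, hcj, Finset.prod_eq_one, mul_one, mul_inv_cancel]
        intro l hl
        simp only [Finset.mem_erase] at hl
        simp [hc, hl.1, hl.2.1]
      have h2 := congrArg (coeff m) (h c hprod)
      rw [coeff_scale] at h2
      have hne : coeff m f ≠ 0 := (mem_support_iff.mp hm)
      have hP : (∏ l, ((c l : k)) ^ m l) = 1 := by
        by_contra hP
        exact hne (by
          have := sub_eq_zero.mpr h2
          rw [← sub_one_mul] at this
          rcases mul_eq_zero.mp this with h' | h'
          · exact absurd (by linear_combination h') hP
          · exact h')
      have hPval : (∏ l, ((c l : k)) ^ m l) = (2 : k) ^ m i * ((2 : k)⁻¹) ^ m j := by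
        rw [← Finset.mul_prod_erase _ _ (Finset.mem_univ i),
          ← Finset.mul_prod_erase _ _ (Finset.mem_erase.mpr ⟨Ne.symm hij, Finset.mem_univ j⟩),
          hci, hcj, Finset.prod_eq_one, mul_one]
        · simp [ha]
        intro l hl
        simp only [Finset.mem_erase] at hl
        simp [hc, hl.1, hl.2.1]
      rw [hPval] at hP
      field_simp at hP
      have : ((2 ^ m i : ℕ) : k) = ((2 ^ m j : ℕ) : k) := by
        push_cast
        rw [one_div, inv_pow, ← div_eq_mul_inv, div_eq_one_iff_eq (pow_ne_zero _ two_ne_zero)] at hP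
        exact hP
      exact Nat.pow_right_injective le_rfl (Nat.cast_injective this)
    -- conclude membership
    rw [f.as_sum]
    refine Subalgebra.sum_mem _ fun m hm => ?_
    have hmconst : ∀ l, m l = m 0 := fun l => key m hm l 0
    have : (monomial m (coeff m f) : MvPolynomial (Fin (n + 1)) k)
        = C (coeff m f) * (∏ i, X i) ^ m 0 := by
      rw [monomial_eq, ← Finset.prod_pow]
      congr 1
      rw [Finsupp.prod_pow]
      exact Finset.prod_congr rfl fun l _ => by rw [hmconst l]
    rw [this, ← algebraMap_eq]
    exact mul_mem (Subalgebra.algebraMap_mem _ _)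
      (pow_mem (Algebra.self_mem_adjoin_singleton k _) _)
  · intro hf c hc
    induction hf using Algebra.adjoin_induction with
    | mem x hx =>
      rw [Set.mem_singleton_iff] at hx
      subst hx
      rw [map_prod]
      have : (∏ i, (C ((c i : k)) * X i : MvPolynomial (Fin (n + 1)) k))
          = C (∏ i, (c i : k)) * ∏ i, X i := by
        rw [Finset.prod_mul_distrib, map_prod]
      simp only [aeval_X]
      rw [this]
      have : (∏ i, (c i : k)) = 1 := by
        rw [← Units.coe_prod, hc, Units.val_one]
      rw [this, map_one, one_mul]
    | algebraMap r => simp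
    | add x y _ _ hx hy => rw [map_add, hx, hy]
    | mul x y _ _ hx hy => rw [map_mul, hx, hy]
end

section
/- Let $k$ be an algebraically closed field of characteristic zero, let $n \geq 0$, and let $A$ be the quotient of the polynomial ring $k[x,y,z,t_1,\dots,t_{n+1}]$ by the ideal generated by $xyz - t_1\cdots t_{n+1}$; write $\bar{x},\bar{y},\bar{z},\bar{t}_i$ for the images of the variables in $A$. If $a, b \in A$ satisfy $a\,\bar{x} + b\,\bar{t}_1 = 0$, then there exist $p, q \in A$ such that $a = p\,\bar{t}_1 + q\,\bar{y}\bar{z}$ and $b = -p\,\bar{x} - q\,\bar{t}_2\cdots\bar{t}_{n+1}$. -/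
open MvPolynomial

noncomputable section

/-- The polynomial ring `k[x, y, z, t₁, …, t_{n+1}]`. -/
abbrev ExpPolyRing (k : Type) [Field k] (n : ℕ) : Type :=
  MvPolynomial (Fin 3 ⊕ Fin (n + 1)) k

/-- The étale local model `A = k[x,y,z,t₁,…,t_{n+1}] / (xyz - t₁ ⋯ t_{n+1})`. -/
abbrev ExpModel (k : Type) [Field k] (n : ℕ) : Type :=
  ExpPolyRing k n ⧸ (Ideal.span
    {(X (Sum.inl 0) * X (Sum.inl 1) * X (Sum.inl 2) -
      ∏ i : Fin (n + 1), X (Sum.inr i) : ExpPolyRing k n)})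

/-- The image `x̄` of the variable `x` in `A`. -/
abbrev ExpModel.x (k : Type) [Field k] (n : ℕ) : ExpModel k n :=
  Ideal.Quotient.mk _ (X (Sum.inl 0))

/-- The image `ȳ` of the variable `y` in `A`. -/
abbrev ExpModel.y (k : Type) [Field k] (n : ℕ) : ExpModel k n :=
  Ideal.Quotient.mk _ (X (Sum.inl 1))

/-- The image `z̄` of the variable `z` in `A`. -/
abbrev ExpModel.z (k : Type) [Field k] (n : ℕ) : ExpModel k n :=
  Ideal.Quotient.mk _ (X (Sum.inl 2))

/-- The image `t̄ᵢ` of the variable `tᵢ` in `A`. -/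
abbrev ExpModel.t (k : Type) [Field k] (n : ℕ) (i : Fin (n + 1)) : ExpModel k n :=
  Ideal.Quotient.mk _ (X (Sum.inr i))



private lemma aeval_killX {σ : Type*} [DecidableEq σ] {R : Type*} [CommRing R] (i : σ)
    (p : MvPolynomial σ R) :
    X i ∣ p - aeval (fun j => if j = i then (0 : MvPolynomial σ R) else X j) p := by
  induction p using MvPolynomial.induction_on' with
  | monomial m r =>
    rw [aeval_monomial]
    by_cases hmi : m i = 0
    · have hp : (m.prod fun j e => (if j = i then (0:MvPolynomial σ R) else X j) ^ e)
          = m.prod fun j e => (X j : MvPolynomial σ R) ^ e := by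
        apply Finsupp.prod_congr
        intro j hj
        have hji : j ≠ i := by
          intro h; exact (Finsupp.mem_support_iff.mp hj) (h ▸ hmi)
        rw [if_neg hji]
      rw [hp, algebraMap_eq, ← monomial_eq, sub_self]; exact dvd_zero _
    · have hp : (m.prod fun j e => (if j = i then (0:MvPolynomial σ R) else X j) ^ e) = 0 := by
        apply Finset.prod_eq_zero (Finsupp.mem_support_iff.mpr hmi)
        simp [hmi]
      rw [hp, mul_zero, sub_zero]
      exact X_dvd_monomial.mpr (Or.inr hmi)
  | add p q hp hq =>
    simpa [map_add, add_sub_add_comm] using dvd_add hp hq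

private lemma prime_X' {σ : Type*} [DecidableEq σ] {R : Type*} [CommRing R] [IsDomain R] (i : σ) :
    Prime (X i : MvPolynomial σ R) := by
  set f := aeval (R := R) (fun j => if j = i then (0 : MvPolynomial σ R) else X j) with hf
  have hker : ∀ p : MvPolynomial σ R, f p = 0 → X i ∣ p := by
    intro p hp
    rw [hf] at hp
    have h2 := aeval_killX i p
    rwa [hp, sub_zero] at h2
  refine ⟨X_ne_zero i, ?_, fun a b hab => ?_⟩
  · intro hu
    have h1 : (X i : MvPolynomial σ R) ∣ monomial 0 1 := by
      simpa [monomial_zero'] using hu.dvd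
    simpa using X_dvd_monomial.mp h1
  · have h0 : f (a * b) = 0 := by
      obtain ⟨c, hc⟩ := hab
      rw [hc, map_mul]
      simp [hf]
    rw [map_mul] at h0
    rcases mul_eq_zero.mp h0 with h | h
    · exact Or.inl (hker a h)
    · exact Or.inr (hker b h)

set_option maxHeartbeats 1000000 in
set_option synthInstance.maxHeartbeats 400000 in
/-- Every syzygy of the pair `(x̄, t̄₁)` in
`A = k[x,y,z,t₁,…,t_{n+1}] / (xyz - t₁ ⋯ t_{n+1})` is a combination of the Koszul syzygy
`(t̄₁, -x̄)` and the extra syzygy `(ȳz̄, -t̄₂ ⋯ t̄_{n+1})`. -/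
theorem syzygy_of_x_t1 (k : Type) [Field k] [IsAlgClosed k] [CharZero k] (n : ℕ)
    (a b : ExpModel k n)
    (h : a * ExpModel.x k n + b * ExpModel.t k n 0 = 0) :
    ∃ p q : ExpModel k n,
      a = p * ExpModel.t k n 0 + q * (ExpModel.y k n * ExpModel.z k n) ∧
      b = -(p * ExpModel.x k n) - q * ∏ i ∈ Finset.univ.erase 0, ExpModel.t k n i := by
  obtain ⟨A, rfl⟩ := Ideal.Quotient.mk_surjective a
  obtain ⟨B, rfl⟩ := Ideal.Quotient.mk_surjective b
  have h' : (A * X (Sum.inl 0) + B * X (Sum.inr 0) : ExpPolyRing k n) ∈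
      Ideal.span {(X (Sum.inl 0) * X (Sum.inl 1) * X (Sum.inl 2) -
        ∏ i : Fin (n + 1), X (Sum.inr i) : ExpPolyRing k n)} := by
    rw [← Ideal.Quotient.eq_zero_iff_mem]
    simpa [map_add, map_mul] using h
  rw [Ideal.mem_span_singleton] at h'
  obtain ⟨C, hC⟩ := h'
  set T' : ExpPolyRing k n := ∏ i ∈ Finset.univ.erase 0, X (Sum.inr i) with hT'
  have hprod : (∏ i : Fin (n + 1), (X (Sum.inr i) : ExpPolyRing k n)) =
      X (Sum.inr 0) * T' := (Finset.mul_prod_erase Finset.univ _ (Finset.mem_univ 0)).symm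
  have key : (X (Sum.inr 0) : ExpPolyRing k n) * (-(B + C * T')) =
      X (Sum.inl 0) * (A - C * (X (Sum.inl 1) * X (Sum.inl 2))) := by
    linear_combination -hC + C * hprod
  have hdvd : (X (Sum.inr 0) : ExpPolyRing k n) ∣
      X (Sum.inl 0) * (A - C * (X (Sum.inl 1) * X (Sum.inl 2))) := ⟨_, key.symm⟩
  rcases (prime_X' (R := k) (Sum.inr 0 : Fin 3 ⊕ Fin (n + 1))).2.2 _ _ hdvd with hx | hAd
  · exact absurd (X_dvd_X.mp hx) (by simp)
  · obtain ⟨P, hP⟩ := hAd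
    have hcan : (X (Sum.inr 0) : ExpPolyRing k n) * (-(B + C * T')) =
        X (Sum.inr 0) * (X (Sum.inl 0) * P) := by
      rw [key, hP]; ring
    have hB := mul_left_cancel₀ (X_ne_zero (Sum.inr 0)) hcan
    refine ⟨Ideal.Quotient.mk _ P, Ideal.Quotient.mk _ C, ?_, ?_⟩
    · have hA : A = X (Sum.inr 0) * P + C * (X (Sum.inl 1) * X (Sum.inl 2)) := by
        linear_combination hP
      rw [hA, map_add, map_mul, map_mul, map_mul]
      ring
    · have hB' : B = -(X (Sum.inl 0) * P) - C * T' := by linear_combination -hB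
      have hT : (∏ i ∈ Finset.univ.erase 0, ExpModel.t k n i) =
          Ideal.Quotient.mk _ T' := by
        rw [hT', map_prod]
      rw [hB', hT, map_sub, map_neg, map_mul, map_mul]
      ring
end
end
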